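/- Define g on the closure of Δ⁺ by g(z) = exp(−e^{iπ/4}/√z) for z ≠ 0 (principal branch of the square root) and g(0) = 0. Then g is holomorphic on Δ⁺, continuous on the closure of Δ⁺, and g vanishes to infinite order at 0: for every N ∈ ℕ, lim_{z→0, z∈Δ⁺} g(z)/|z|^N = 0. -/

import Mathlib

open Complex Filter Set Topology

noncomputable section

/-- The open upper half-disc `Δ⁺ = {z : |z| < 1, Im z > 0}`. -/
def upperHalfDisk : Set ℂ := {z : ℂ | ‖z‖ < 1 ∧ 0 < z.im}

/-- `f` extends `C^∞`-smoothly to the closure of `Δ⁺`: it is smooth (as a map of real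
2-dimensional domains) on an open neighbourhood of the closure. -/
def smoothUpToClosure (f : ℂ → ℂ) : Prop :=
  ∃ U : Set ℂ, IsOpen U ∧ closure upperHalfDisk ⊆ U ∧ ContDiffOn ℝ (⊤ : ℕ∞) f U

/-- The zero set of the restriction of `f` to the interval `(-1,1)`. -/
def zerosOnInterval (f : ℂ → ℂ) : Set ℝ := {x : ℝ | x ∈ Set.Ioo (-1 : ℝ) 1 ∧ f x = 0}

/-- The zero set of `f` on `(-1,1)` is discrete with `0` as its only limit point. -/
def zeroSetDiscreteAccAtZero (f : ℂ → ℂ) : Prop :=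
  AccPt (0 : ℝ) (Filter.principal (zerosOnInterval f)) ∧
    ∀ x : ℝ, x ≠ 0 → ¬ AccPt x (Filter.principal (zerosOnInterval f))

/-- `f` vanishes to infinite order at `0` (approach within `Δ⁺`). -/
def vanishesInfOrderAtZero (f : ℂ → ℂ) : Prop :=
  ∀ N : ℕ, Tendsto (fun z => f z / (‖z‖ : ℂ) ^ N) (𝓝[upperHalfDisk] 0) (𝓝 0)

/-- The function `g(z) = exp(−e^{iπ/4}/√z)` (principal square root), `g(0) = 0`. -/
def lakner_g : ℂ → ℂ := fun z =>
  if z = 0 then 0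
  else Complex.exp (-(Complex.exp ((Real.pi : ℂ) / 4 * Complex.I)) / z ^ ((1 : ℂ) / 2))

lemma lakner_g_eq {z : ℂ} (hz : z ≠ 0) :
    lakner_g z =
      Complex.exp (-(Complex.exp ((Real.pi : ℂ) / 4 * Complex.I - Complex.log z * (1 / 2)))) := by
  simp only [lakner_g, if_neg hz]
  rw [Complex.cpow_def_of_ne_zero hz, neg_div, ← Complex.exp_sub]

lemma u_re {z : ℂ} :
    ((Real.pi : ℂ) / 4 * Complex.I - Complex.log z * (1 / 2)).re
      = -(Real.log (‖z‖) / 2) := by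
  simp [Complex.sub_re, Complex.mul_re, Complex.log_re, Complex.log_im, Complex.div_re]
  ring

lemma u_im {z : ℂ} :
    ((Real.pi : ℂ) / 4 * Complex.I - Complex.log z * (1 / 2)).im
      = Real.pi / 4 - Complex.arg z / 2 := by
  simp [Complex.sub_im, Complex.mul_im, Complex.log_re, Complex.log_im, Complex.div_im,
    Complex.div_re]
  ring

lemma cos_bound {z : ℂ} (him : 0 ≤ z.im) :
    Real.sqrt 2 / 2 ≤ Real.cos (Real.pi / 4 - Complex.arg z / 2) := by
  have h1 : 0 ≤ Complex.arg z := Complex.arg_nonneg_iff.2 him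
  have h2 : Complex.arg z ≤ Real.pi := Complex.arg_le_pi z
  have habs : |Real.pi / 4 - Complex.arg z / 2| ≤ Real.pi / 4 := by
    rw [abs_le]; constructor <;> nlinarith [Real.pi_pos]
  calc Real.sqrt 2 / 2 = Real.cos (Real.pi / 4) := Real.cos_pi_div_four.symm
    _ ≤ Real.cos |Real.pi / 4 - Complex.arg z / 2| :=
        Real.cos_le_cos_of_nonneg_of_le_pi (abs_nonneg _)
          (by linarith [Real.pi_pos]) habs
    _ = Real.cos (Real.pi / 4 - Complex.arg z / 2) := Real.cos_abs _

lemma abs_bound {z : ℂ} (hz : z ≠ 0) (him : 0 ≤ z.im) :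
    ‖lakner_g z‖
      ≤ Real.exp (-(‖z‖ ^ (-(1 : ℝ) / 2) * (Real.sqrt 2 / 2))) := by
  have habs : 0 < ‖z‖ := norm_pos_iff.mpr hz
  rw [lakner_g_eq hz, Complex.norm_exp, Real.exp_le_exp]
  rw [Complex.neg_re, Complex.exp_re, u_re, u_im]
  have hre : Real.exp (-(Real.log (‖z‖) / 2)) = ‖z‖ ^ (-(1 : ℝ) / 2) := by
    rw [Real.rpow_def_of_pos habs]
    ring_nf
  rw [hre]
  have h1 := cos_bound (z := z) him
  have h2 : (0 : ℝ) ≤ ‖z‖ ^ (-(1 : ℝ) / 2) := Real.rpow_nonneg habs.le _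
  nlinarith

lemma bound_tendsto (N : ℕ) :
    Tendsto (fun r : ℝ => Real.exp (-(r ^ (-(1 : ℝ) / 2) * (Real.sqrt 2 / 2))) / r ^ N)
      (𝓝[>] (0 : ℝ)) (𝓝 0) := by
  have hc : (0 : ℝ) < Real.sqrt 2 / 2 := by positivity
  -- r ↦ r ^ (-1/2) tends to atTop
  have h1 : Tendsto (fun r : ℝ => r ^ (-(1 : ℝ) / 2)) (𝓝[>] (0 : ℝ)) atTop := by
    have := (tendsto_rpow_atTop (y := 1/2) (by norm_num)).comp tendsto_inv_nhdsGT_zero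
    refine this.congr' ?_
    filter_upwards [self_mem_nhdsWithin] with r hr
    have hr' : (0 : ℝ) < r := hr
    rw [Function.comp_apply, ← Real.rpow_neg_one r, ← Real.rpow_mul hr'.le]
    norm_num
  -- t ↦ t^(2N) * exp(-(t*c)) tends to 0
  have h2 : Tendsto (fun t : ℝ => t ^ (2 * N) * Real.exp (-(t * (Real.sqrt 2 / 2))))
      atTop (𝓝 0) := by
    have h3 : Tendsto (fun t : ℝ => t * (Real.sqrt 2 / 2)) atTop atTop :=
      Tendsto.atTop_mul_const hc tendsto_id
    have h4 := (Real.tendsto_pow_mul_exp_neg_atTop_nhds_zero (2 * N)).comp h3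
    have h5 := h4.const_mul (((Real.sqrt 2 / 2) ^ (2 * N))⁻¹)
    rw [mul_zero] at h5
    refine h5.congr fun t => ?_
    simp only [Function.comp_apply, mul_pow]
    field_simp
  have h6 := h2.comp h1
  refine h6.congr' ?_
  filter_upwards [self_mem_nhdsWithin] with r hr
  have hr' : (0 : ℝ) < r := hr
  have hp : (r ^ (-(1 : ℝ) / 2)) ^ (2 * N) = (r ^ N)⁻¹ := by
    rw [← Real.rpow_natCast (r ^ (-(1:ℝ)/2)) (2*N), ← Real.rpow_mul hr'.le]
    have he : (-(1:ℝ)/2) * ((2*N : ℕ) : ℝ) = -(N:ℝ) := by push_cast; ring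
    rw [he, Real.rpow_neg hr'.le, Real.rpow_natCast]
  simp only [Function.comp_apply, hp]
  rw [mul_comm]; exact (div_eq_mul_inv (Real.exp (-(r ^ (-(1:ℝ) / 2) * (Real.sqrt 2 / 2)))) (r ^ N)).symm

lemma upperHalfDisk_ne_zero {z : ℂ} (hz : z ∈ upperHalfDisk) : z ≠ 0 := by
  intro h
  have := hz.2
  rw [h] at this
  simp at this

lemma abs_tendsto_within :
    Tendsto (fun z : ℂ => ‖z‖) (𝓝[upperHalfDisk] 0) (𝓝[>] (0 : ℝ)) := by
  apply tendsto_nhdsWithin_of_tendsto_nhds_of_eventually_within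
  · simpa using (continuous_norm.tendsto (0 : ℂ)).mono_left nhdsWithin_le_nhds
  · filter_upwards [self_mem_nhdsWithin] with z hz
    exact norm_pos_iff.mpr (upperHalfDisk_ne_zero hz)

lemma lakner_g_vanishes : vanishesInfOrderAtZero lakner_g := by
  intro N
  rw [tendsto_zero_iff_norm_tendsto_zero]
  apply squeeze_zero'
    (g := fun z : ℂ => Real.exp (-(‖z‖ ^ (-(1 : ℝ) / 2) * (Real.sqrt 2 / 2)))
      / (‖z‖) ^ N)
  · exact Eventually.of_forall fun z => norm_nonneg _
  · filter_upwards [self_mem_nhdsWithin] with z hz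
    have hz0 : z ≠ 0 := upperHalfDisk_ne_zero hz
    have habs : 0 < ‖z‖ := norm_pos_iff.mpr hz0
    rw [norm_div, norm_pow, Complex.norm_real, Real.norm_eq_abs, _root_.abs_of_nonneg habs.le]
    gcongr
    exact abs_bound hz0 hz.2.le
  · exact (bound_tendsto N).comp abs_tendsto_within

lemma hlog_cwa {z : ℂ} (hz0 : z ≠ 0) (him : 0 ≤ z.im) :
    ContinuousWithinAt Complex.log {w : ℂ | 0 ≤ w.im} z := by
  by_cases h : z.im = 0
  · rcases lt_trichotomy z.re 0 with hre | hre | hre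
    · exact Complex.continuousWithinAt_log_of_re_neg_of_im_zero hre h
    · exact absurd (Complex.ext hre h) hz0
    · exact (continuousAt_clog (Or.inl hre)).continuousWithinAt
  · exact (continuousAt_clog (Or.inr h)).continuousWithinAt

lemma lakner_g_continuousOn : ContinuousOn lakner_g (closure upperHalfDisk) := by
  have hsub : closure upperHalfDisk ⊆ {z : ℂ | 0 ≤ z.im} :=
    closure_minimal (fun z hz => hz.2.le) (isClosed_le continuous_const Complex.continuous_im)
  refine ContinuousOn.mono ?_ hsub
  intro z hz
  by_cases hz0 : z = 0
  · subst hz0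
    rw [← continuousWithinAt_diff_self]
    have hg0 : lakner_g 0 = 0 := if_pos rfl
    unfold ContinuousWithinAt
    rw [hg0, tendsto_zero_iff_norm_tendsto_zero]
    apply squeeze_zero'
      (g := fun z : ℂ => Real.exp (-(‖z‖ ^ (-(1 : ℝ) / 2) * (Real.sqrt 2 / 2))))
    · exact Eventually.of_forall fun z => norm_nonneg _
    · filter_upwards [self_mem_nhdsWithin] with w hw
      have hw0 : w ≠ 0 := by simpa using hw.2
      exact abs_bound hw0 hw.1
    · have habs : Tendsto (fun z : ℂ => ‖z‖)
          (𝓝[{w : ℂ | 0 ≤ w.im} \ {0}] 0) (𝓝[>] (0 : ℝ)) := by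
        apply tendsto_nhdsWithin_of_tendsto_nhds_of_eventually_within
        · simpa using (continuous_norm.tendsto (0 : ℂ)).mono_left nhdsWithin_le_nhds
        · filter_upwards [self_mem_nhdsWithin] with w hw
          exact norm_pos_iff.mpr (by simpa using hw.2)
      have := (bound_tendsto 0).comp habs
      refine this.congr fun w => ?_
      simp [Function.comp_apply]
  · have hE : ContinuousWithinAt (fun w => Complex.exp
        (-(Complex.exp ((Real.pi : ℂ) / 4 * Complex.I - Complex.log w * (1 / 2)))))
        {w : ℂ | 0 ≤ w.im} z := by
      have h1 : ContinuousWithinAt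
          (fun w : ℂ => (Real.pi : ℂ) / 4 * Complex.I - Complex.log w * (1 / 2))
          {w : ℂ | 0 ≤ w.im} z :=
        continuousWithinAt_const.sub ((hlog_cwa hz0 hz).mul continuousWithinAt_const)
      have h2 := Complex.continuous_exp.continuousAt.comp_continuousWithinAt h1
      exact Complex.continuous_exp.continuousAt.comp_continuousWithinAt h2.neg
    refine hE.congr_of_eventuallyEq ?_ (lakner_g_eq hz0)
    have hev : ∀ᶠ w in 𝓝[{w : ℂ | 0 ≤ w.im}] z, w ≠ 0 :=
      eventually_nhdsWithin_of_eventually_nhds (isOpen_ne.eventually_mem hz0)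
    filter_upwards [hev] with w hw
    exact lakner_g_eq hw

lemma lakner_g_diffOn : DifferentiableOn ℂ lakner_g upperHalfDisk := by
  have hdiff : DifferentiableOn ℂ
      (fun z : ℂ => Complex.exp (-(Complex.exp ((Real.pi : ℂ) / 4 * Complex.I))
        / z ^ ((1 : ℂ) / 2))) upperHalfDisk := by
    intro z hz
    have hz0 : z ≠ 0 := upperHalfDisk_ne_zero hz
    have hslit : z ∈ Complex.slitPlane := Complex.mem_slitPlane_iff.mpr (Or.inr hz.2.ne')
    have hpow : DifferentiableAt ℂ (fun w : ℂ => w ^ ((1 : ℂ) / 2)) z :=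
      differentiableAt_id.cpow (differentiableAt_const _) hslit
    have hne : z ^ ((1 : ℂ) / 2) ≠ 0 := by
      simp [Complex.cpow_eq_zero_iff, hz0]
    exact (((differentiableAt_const _).div hpow hne).cexp).differentiableWithinAt
  exact hdiff.congr fun x hx => if_neg (upperHalfDisk_ne_zero hx)

/-- `g(z) = exp(−e^{iπ/4}/√z)` is holomorphic on `Δ⁺`, continuous on the closed upper
half-disc, and vanishes to infinite order at `0`. -/
theorem lakner_g_holomorphic_continuous_vanishes :
    DifferentiableOn ℂ lakner_g upperHalfDisk ∧
      ContinuousOn lakner_g (closure upperHalfDisk) ∧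
      vanishesInfOrderAtZero lakner_g := by
  exact ⟨lakner_g_diffOn, lakner_g_continuousOn, lakner_g_vanishes⟩
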